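/- arXiv:2210.13500 — 9 statements merged into one kernel-verified Lean document; each statement's English description precedes it below -/
import Mathlib

section
/- Let N ≥ 1, let H be a finite-dimensional complex inner product space, let ω₀ ∈ H be a unit vector, and let X_P, Z_P be unitary operators on H. Let X_L, Z_L denote the generalized Pauli operators on ℂ^N (X_L e_j = e_{j+1 mod N}, Z_L e_j = exp(2πij/N) e_j) and let e₀ be the first standard basis vector. Suppose that for every finite sequence of integer pairs (a₁,b₁),…,(a_m,b_m), the correlation functions agree exactly: ⟪ω₀, X_P^{a₁} Z_P^{b₁} ⋯ X_P^{a_m} Z_P^{b_m} ω₀⟫ = ⟪e₀, X_L^{a₁} Z_L^{b₁} ⋯ X_L^{a_m} Z_L^{b_m} e₀⟫. Then there exists a linear isometry V : ℂ^N → H such that for all integers a, b: (X_P^a Z_P^b) ∘ V = V ∘ (X_L^a Z_L^b), and X_P^a Z_P^b commutes with the projector V ∘ V†. -/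
/-!
With `g k = X_P^k ω₀` and `e k = X_L^k e₀`, every inner product `⟪g i, W_P g j⟫`, for `W` a word
in `X` and `Z`, is itself a correlator of a word, hence equals `⟪e i, W_L e j⟫`. The empty word
makes `(g k)_{k < N}` orthonormal, so `e k ↦ g k` is an isometry `V`, and the one-letter words
give the compression identity `V† (X_P^a Z_P^b) V = X_L^a Z_L^b`. Since both operators preserve
norms, the equality case of Cauchy–Schwarz upgrades this to `X_P^a Z_P^b V = V X_L^a Z_L^b`, and
unitarity then makes `X_P^a Z_P^b` commute with `V V†`.
-/

open ContinuousLinearMap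

section InnerProductSpace

variable {𝕜 E F : Type*} [RCLike 𝕜]
  [NormedAddCommGroup E] [InnerProductSpace 𝕜 E] [NormedAddCommGroup F] [InnerProductSpace 𝕜 F]

theorem eq_of_norm_eq_of_inner_eq_norm_sq {x y : F} (hxy : ‖x‖ = ‖y‖)
    (h : inner 𝕜 x y = (‖x‖ : 𝕜) ^ 2) : x = y := by
  have : ‖x - y‖ ^ 2 = 0 := by
    rw [norm_sub_sq (𝕜 := 𝕜), h, ← hxy]
    norm_cast
    ring
  simpa [sub_eq_zero] using this

theorem Module.Basis.ext_inner_map_map {ι G : Type*} [NormedAddCommGroup G]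
    [InnerProductSpace 𝕜 G] (b : Module.Basis ι 𝕜 E) {A B : E →ₗ[𝕜] F} {C D : E →ₗ[𝕜] G}
    (h : ∀ i j, inner 𝕜 (A (b i)) (B (b j)) = inner 𝕜 (C (b i)) (D (b j))) (x y : E) :
    inner 𝕜 (A x) (B y) = inner 𝕜 (C x) (D y) :=
  congrArg (fun T => T x y) <| LinearMap.ext_basis (B := ((innerₛₗ 𝕜).comp A).compl₂ B)
    (B' := ((innerₛₗ 𝕜).comp C).compl₂ D) b b h

theorem LinearIsometry.apply_map_eq_map_apply_of_inner_eq (V : E →ₗᵢ[𝕜] F) {U : F →L[𝕜] F}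
    {L : E →L[𝕜] E} (hU : ∀ y, ‖U y‖ = ‖y‖) (hL : ∀ x, ‖L x‖ = ‖x‖)
    (h : ∀ x y, inner 𝕜 (V x) (U (V y)) = inner 𝕜 x (L y)) (x : E) :
    U (V x) = V (L x) := by
  refine (eq_of_norm_eq_of_inner_eq_norm_sq (𝕜 := 𝕜) ?_ ?_).symm
  · rw [V.norm_map, hU, V.norm_map, hL]
  · rw [h, V.norm_map, inner_self_eq_norm_sq_to_K]

theorem LinearIsometry.apply_map_eq_map_apply_of_basis {ι : Type*} (V : E →ₗᵢ[𝕜] F)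
    (b : Module.Basis ι 𝕜 E) {U : F →L[𝕜] F} {L : E →L[𝕜] E} (hU : ∀ y, ‖U y‖ = ‖y‖)
    (hL : ∀ x, ‖L x‖ = ‖x‖) (h : ∀ i j, inner 𝕜 (V (b i)) (U (V (b j))) = inner 𝕜 (b i) (L (b j)))
    (x : E) : U (V x) = V (L x) :=
  V.apply_map_eq_map_apply_of_inner_eq hU hL (b.ext_inner_map_map (A := V.toLinearMap)
    (B := U.toLinearMap ∘ₗ V.toLinearMap) (C := LinearMap.id) (D := L.toLinearMap) h) x

theorem commute_comp_adjoint_of_comp_eq [CompleteSpace E] [CompleteSpace F]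
    {U : F →L[𝕜] F} {L : E →L[𝕜] E} {W : E →L[𝕜] F} (hU : U ∈ unitary (F →L[𝕜] F))
    (hL : L ∈ unitary (E →L[𝕜] E)) (h : U ∘L W = W ∘L L) :
    Commute U (W ∘L adjoint W) := by
  have hU' : adjoint U ∘L U = 1 := Unitary.star_mul_self_of_mem hU
  have hL' : L ∘L adjoint L = 1 := Unitary.mul_star_self_of_mem hL
  have h_adj : adjoint U ∘L W = W ∘L adjoint L := by
    calc adjoint U ∘L W = adjoint U ∘L (W ∘L (L ∘L adjoint L)) := by rw [hL', one_def, comp_id]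
      _ = (adjoint U ∘L U) ∘L W ∘L adjoint L := by rw [← comp_assoc W, ← h]; simp only [comp_assoc]
      _ = W ∘L adjoint L := by rw [hU', one_def, id_comp]
  have h_adj' : L ∘L adjoint W = adjoint W ∘L U := by
    simpa only [adjoint_comp, adjoint_adjoint] using congrArg adjoint h_adj.symm
  calc U * (W ∘L adjoint W) = W ∘L (L ∘L adjoint W) := by
        rw [mul_def, ← comp_assoc, h, comp_assoc]
    _ = (W ∘L adjoint W) * U := by rw [h_adj', mul_def, comp_assoc]

noncomputable def OrthonormalBasis.isometryOfOrthonormal {ι : Type*} [Fintype ι]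
    (b : OrthonormalBasis ι 𝕜 E) {v : ι → F} (hv : Orthonormal 𝕜 v) : E →ₗᵢ[𝕜] F :=
  (b.toBasis.constr 𝕜 v).isometryOfOrthonormal (v := b.toBasis)
    (by rw [b.coe_toBasis]; exact b.orthonormal)
    (by rwa [show ⇑(b.toBasis.constr 𝕜 v) ∘ ⇑b.toBasis = v from
      funext (b.toBasis.constr_basis 𝕜 v)])

@[simp]
theorem OrthonormalBasis.isometryOfOrthonormal_apply {ι : Type*} [Fintype ι]
    (b : OrthonormalBasis ι 𝕜 E) {v : ι → F} (hv : Orthonormal 𝕜 v) (i : ι) :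
    b.isometryOfOrthonormal hv (b i) = v i := by
  change b.toBasis.constr 𝕜 v (b i) = v i
  rw [← b.coe_toBasis, Module.Basis.constr_basis]

end InnerProductSpace

theorem Unitary.inner_map_left {𝕜 F : Type*} [RCLike 𝕜] [NormedAddCommGroup F]
    [InnerProductSpace 𝕜 F] [CompleteSpace F] (u : unitary (F →L[𝕜] F)) (x y : F) :
    inner 𝕜 ((u : F →L[𝕜] F) x) y = inner 𝕜 x (((u⁻¹ : unitary (F →L[𝕜] F)) : F →L[𝕜] F) y) := by
  rw [← adjoint_inner_right, ← star_eq_adjoint, ← Unitary.coe_star, Unitary.star_eq_inv]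

theorem pow_smul_of_smul_eq_add_one {M α R : Type*} [Monoid M] [MulAction M α]
    [AddMonoidWithOne R] {u : M} {v : R → α} (h : ∀ r, u • v r = v (r + 1)) (n : ℕ) :
    u ^ n • v 0 = v n := by
  induction n with
  | zero => simp
  | succ n ih => rw [pow_succ', mul_smul, ih, h, Nat.cast_succ]

section Words

variable {G : Type*} [Group G]

def zpowWord (x z : G) (l : List (ℤ × ℤ)) : G :=
  (l.map fun p => x ^ p.1 * z ^ p.2).prod

@[simp]
theorem zpowWord_nil (x z : G) : zpowWord x z [] = 1 := rfl

@[simp]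
theorem zpowWord_singleton (x z : G) (a b : ℤ) : zpowWord x z [(a, b)] = x ^ a * z ^ b := by
  simp [zpowWord]

theorem zpowWord_cons_append (x z : G) (l : List (ℤ × ℤ)) (i j : ℤ) :
    zpowWord x z ((i, 0) :: l ++ [(j, 0)]) = x ^ i * zpowWord x z l * x ^ j := by
  simp [zpowWord, mul_assoc]

end Words

section Correlations

variable {𝕜 E F : Type*} [RCLike 𝕜]
  [NormedAddCommGroup E] [InnerProductSpace 𝕜 E] [CompleteSpace E]
  [NormedAddCommGroup F] [InnerProductSpace 𝕜 F] [CompleteSpace F]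

theorem Unitary.inner_zpow_apply_zpowWord_zpow_apply (X Z : unitary (F →L[𝕜] F)) (ω : F)
    (l : List (ℤ × ℤ)) (i j : ℤ) :
    inner 𝕜 (((X ^ i : unitary (F →L[𝕜] F)) : F →L[𝕜] F) ω)
        (((zpowWord X Z l : unitary (F →L[𝕜] F)) : F →L[𝕜] F)
          (((X ^ j : unitary (F →L[𝕜] F)) : F →L[𝕜] F) ω))
      = inner 𝕜 ω
        (((zpowWord X Z ((-i, 0) :: l ++ [(j, 0)]) : unitary (F →L[𝕜] F)) : F →L[𝕜] F) ω) := by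
  rw [Unitary.inner_map_left, zpowWord_cons_append, ← zpow_neg]
  rfl

theorem inner_zpow_apply_zpowWord_zpow_apply_eq (XP ZP : unitary (F →L[𝕜] F))
    (XL ZL : unitary (E →L[𝕜] E)) {ω : F} {ξ : E}
    (hcorr : ∀ l, inner 𝕜 ω (((zpowWord XP ZP l : unitary (F →L[𝕜] F)) : F →L[𝕜] F) ω)
      = inner 𝕜 ξ (((zpowWord XL ZL l : unitary (E →L[𝕜] E)) : E →L[𝕜] E) ξ))
    (l : List (ℤ × ℤ)) (i j : ℤ) :
    inner 𝕜 (((XP ^ i : unitary (F →L[𝕜] F)) : F →L[𝕜] F) ω)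
        (((zpowWord XP ZP l : unitary (F →L[𝕜] F)) : F →L[𝕜] F)
          (((XP ^ j : unitary (F →L[𝕜] F)) : F →L[𝕜] F) ω))
      = inner 𝕜 (((XL ^ i : unitary (E →L[𝕜] E)) : E →L[𝕜] E) ξ)
        (((zpowWord XL ZL l : unitary (E →L[𝕜] E)) : E →L[𝕜] E)
          (((XL ^ j : unitary (E →L[𝕜] E)) : E →L[𝕜] E) ξ)) := by
  rw [Unitary.inner_zpow_apply_zpowWord_zpow_apply, Unitary.inner_zpow_apply_zpowWord_zpow_apply,
    hcorr]

end Correlations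

theorem exact_reconstruction_isometry_general
    (N : ℕ) [NeZero N]
    (H : Type*) [NormedAddCommGroup H] [InnerProductSpace ℂ H] [FiniteDimensional ℂ H]
    (ω₀ : H)
    (XP ZP : unitary (H →L[ℂ] H))
    (XL ZL : unitary (EuclideanSpace ℂ (Fin N) →L[ℂ] EuclideanSpace ℂ (Fin N)))
    (hXL : ∀ j : Fin N,
      (XL : EuclideanSpace ℂ (Fin N) →L[ℂ] EuclideanSpace ℂ (Fin N))
          (EuclideanSpace.single j 1)
        = EuclideanSpace.single (j + 1) 1)
    (hcorr : ∀ l : List (ℤ × ℤ),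
      (inner ℂ ω₀
        (((((l.map fun p => XP ^ p.1 * ZP ^ p.2).prod : unitary (H →L[ℂ] H)) :
            H →L[ℂ] H)) ω₀) : ℂ)
      = (inner ℂ (EuclideanSpace.single (0 : Fin N) (1 : ℂ))
        (((((l.map fun p => XL ^ p.1 * ZL ^ p.2).prod :
              unitary (EuclideanSpace ℂ (Fin N) →L[ℂ] EuclideanSpace ℂ (Fin N))) :
            EuclideanSpace ℂ (Fin N) →L[ℂ] EuclideanSpace ℂ (Fin N)))
          (EuclideanSpace.single (0 : Fin N) (1 : ℂ))) : ℂ)) :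
    ∃ V : EuclideanSpace ℂ (Fin N) →ₗᵢ[ℂ] H,
      (∀ (a b : ℤ) (x : EuclideanSpace ℂ (Fin N)),
        ((XP ^ a * ZP ^ b : unitary (H →L[ℂ] H)) : H →L[ℂ] H) (V x)
          = V (((XL ^ a * ZL ^ b :
              unitary (EuclideanSpace ℂ (Fin N) →L[ℂ] EuclideanSpace ℂ (Fin N))) :
              EuclideanSpace ℂ (Fin N) →L[ℂ] EuclideanSpace ℂ (Fin N)) x)) ∧
      (∀ a b : ℤ,
        Commute ((XP ^ a * ZP ^ b : unitary (H →L[ℂ] H)) : H →L[ℂ] H)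
          (V.toContinuousLinearMap ∘L adjoint V.toContinuousLinearMap)) := by
  have hshift : ∀ k : Fin N, ((XL ^ ((k : ℕ) : ℤ) : unitary _) :
      EuclideanSpace ℂ (Fin N) →L[ℂ] EuclideanSpace ℂ (Fin N)) (EuclideanSpace.single 0 1)
        = EuclideanSpace.single k 1 := by
    intro k
    rw [zpow_natCast, SubmonoidClass.coe_pow]
    conv_rhs => rw [← Fin.cast_val_eq_self k]
    open Fin.CommRing in
    exact pow_smul_of_smul_eq_add_one (R := Fin N) (v := fun j => EuclideanSpace.single j (1 : ℂ))
      (u := (XL : EuclideanSpace ℂ (Fin N) →L[ℂ] EuclideanSpace ℂ (Fin N))) hXL k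
  set g : Fin N → H := fun k => ((XP ^ ((k : ℕ) : ℤ) : unitary (H →L[ℂ] H)) : H →L[ℂ] H) ω₀
  have hgram : ∀ l (i j : Fin N),
      inner ℂ (g i) (((zpowWord XP ZP l : unitary (H →L[ℂ] H)) : H →L[ℂ] H) (g j))
        = inner ℂ (EuclideanSpace.single i 1) (((zpowWord XL ZL l : unitary _) :
            EuclideanSpace ℂ (Fin N) →L[ℂ] EuclideanSpace ℂ (Fin N))
              (EuclideanSpace.single j 1)) := by
    intro l i j
    rw [← hshift i, ← hshift j]
    exact inner_zpow_apply_zpowWord_zpow_apply_eq XP ZP XL ZL hcorr l _ _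
  have hg : Orthonormal ℂ g := by
    refine orthonormal_iff_ite.mpr fun i j => ?_
    simpa only [zpowWord_nil, OneMemClass.coe_one, one_apply_eq_self,
      orthonormal_iff_ite.mp EuclideanSpace.orthonormal_single i j] using hgram [] i j
  set V := (EuclideanSpace.basisFun (Fin N) ℂ).isometryOfOrthonormal hg
  have hV : ∀ (a b : ℤ) x, ((XP ^ a * ZP ^ b : unitary (H →L[ℂ] H)) : H →L[ℂ] H) (V x)
      = V (((XL ^ a * ZL ^ b : unitary _) :
          EuclideanSpace ℂ (Fin N) →L[ℂ] EuclideanSpace ℂ (Fin N)) x) := fun a b =>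
    V.apply_map_eq_map_apply_of_basis (EuclideanSpace.basisFun (Fin N) ℂ).toBasis
      (Unitary.norm_map _) (Unitary.norm_map _) fun i j => by
        simp only [OrthonormalBasis.coe_toBasis, V, OrthonormalBasis.isometryOfOrthonormal_apply]
        simpa only [EuclideanSpace.basisFun_apply, zpowWord_singleton] using hgram [(a, b)] i j
  exact ⟨V, hV, fun a b => commute_comp_adjoint_of_comp_eq (XP ^ a * ZP ^ b).prop
    (XL ^ a * ZL ^ b).prop (ContinuousLinearMap.ext (hV a b))⟩

/-- Exact reconstruction theorem: exactly matching correlation functions of the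
generalized Pauli excitation operators between the physical system `(H, ω₀, X_P, Z_P)`
and the logical system `(ℂ^N, e₀, X_L, Z_L)` imply the existence of an encoding
isometry `V` intertwining logical and physical operators and commuting with the
code-space projector `V V†`. -/
theorem exact_reconstruction_isometry
    (N : ℕ) (hN : 1 ≤ N) [NeZero N]
    (H : Type*) [NormedAddCommGroup H] [InnerProductSpace ℂ H] [FiniteDimensional ℂ H]
    (ω₀ : H) (hω₀ : ‖ω₀‖ = 1)
    (XP ZP : unitary (H →L[ℂ] H))
    (XL ZL : unitary (EuclideanSpace ℂ (Fin N) →L[ℂ] EuclideanSpace ℂ (Fin N)))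
    (hXL : ∀ j : Fin N,
      (XL : EuclideanSpace ℂ (Fin N) →L[ℂ] EuclideanSpace ℂ (Fin N))
          (EuclideanSpace.single j 1)
        = EuclideanSpace.single (j + 1) 1)
    (hZL : ∀ j : Fin N,
      (ZL : EuclideanSpace ℂ (Fin N) →L[ℂ] EuclideanSpace ℂ (Fin N))
          (EuclideanSpace.single j 1)
        = Complex.exp (2 * Real.pi * Complex.I * (j : ℕ) / N) • EuclideanSpace.single j 1)
    (hcorr : ∀ l : List (ℤ × ℤ),
      (inner ℂ ω₀
        (((((l.map fun p => XP ^ p.1 * ZP ^ p.2).prod : unitary (H →L[ℂ] H)) :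
            H →L[ℂ] H)) ω₀) : ℂ)
      = (inner ℂ (EuclideanSpace.single (0 : Fin N) (1 : ℂ))
        (((((l.map fun p => XL ^ p.1 * ZL ^ p.2).prod :
              unitary (EuclideanSpace ℂ (Fin N) →L[ℂ] EuclideanSpace ℂ (Fin N))) :
            EuclideanSpace ℂ (Fin N) →L[ℂ] EuclideanSpace ℂ (Fin N)))
          (EuclideanSpace.single (0 : Fin N) (1 : ℂ))) : ℂ)) :
    ∃ V : EuclideanSpace ℂ (Fin N) →ₗᵢ[ℂ] H,
      (∀ (a b : ℤ) (x : EuclideanSpace ℂ (Fin N)),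
        ((XP ^ a * ZP ^ b : unitary (H →L[ℂ] H)) : H →L[ℂ] H) (V x)
          = V (((XL ^ a * ZL ^ b :
              unitary (EuclideanSpace ℂ (Fin N) →L[ℂ] EuclideanSpace ℂ (Fin N))) :
              EuclideanSpace ℂ (Fin N) →L[ℂ] EuclideanSpace ℂ (Fin N)) x)) ∧
      (∀ a b : ℤ,
        Commute ((XP ^ a * ZP ^ b : unitary (H →L[ℂ] H)) : H →L[ℂ] H)
          (V.toContinuousLinearMap ∘L adjoint V.toContinuousLinearMap)) :=
  exact_reconstruction_isometry_general N H ω₀ XP ZP XL ZL hXL hcorr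
end

section
/- Let H and K be finite-dimensional complex inner product spaces, let O : H → H be a linear operator, and let V : K → H be any linear map. Then there exists a unitary operator U on H such that ‖(U − O) ∘ V‖ ≤ ‖(O† ∘ O − id_H) ∘ V‖, where ‖·‖ denotes the operator norm. -/
/-!
Polar decomposition: with `P = |O| = √(O†O)` one has `‖P x‖ = ‖O x‖`, so `P x ↦ O x` is a
well-defined isometry on the range of `P`, which extends to a unitary `U` with `U P = O`. Then
`‖(U - O) x‖ = ‖(1 - P) x‖ ≤ ‖(1 + P)(1 - P) x‖ = ‖(O†O - 1) x‖`, because `1 + P ≥ 1` commutes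
with `1 - P`.
-/

open ContinuousLinearMap

theorem exists_unitary_apply_eq_of_norm_apply_eq {E H : Type*} [AddCommGroup E] [Module ℂ E]
    [NormedAddCommGroup H] [InnerProductSpace ℂ H] [FiniteDimensional ℂ H] (S T : E →ₗ[ℂ] H)
    (hST : ∀ x, ‖S x‖ = ‖T x‖) :
    ∃ U ∈ unitary (H →L[ℂ] H), ∀ x, U (S x) = T x := by
  have hker : LinearMap.ker S ≤ LinearMap.ker T := fun x hx => by
    rw [LinearMap.mem_ker, ← norm_eq_zero, ← hST, hx, norm_zero]
  let L : LinearMap.range S →ₗ[ℂ] H :=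
    (LinearMap.ker S).liftQ T hker ∘ₗ S.quotKerEquivRange.symm
  have hL : ∀ x, L ⟨S x, S.mem_range_self x⟩ = T x := fun x => by
    simp [L, LinearMap.quotKerEquivRange_symm_apply_image]
  let L' : LinearMap.range S →ₗᵢ[ℂ] H := ⟨L, by rintro ⟨_, x, rfl⟩; rw [hL, ← hST]; rfl⟩
  let e := L'.extend.toLinearIsometryEquiv rfl
  refine ⟨e, (Unitary.linearIsometryEquiv.symm e).property, fun x => ?_⟩
  exact (L'.extend_apply ⟨S x, S.mem_range_self x⟩).trans (hL x)

namespace ContinuousLinearMap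

theorem IsPositive.norm_le_norm_add_apply {𝕜 E : Type*} [RCLike 𝕜]
    [NormedAddCommGroup E] [InnerProductSpace 𝕜 E] {P : E →L[𝕜] E} (hP : P.IsPositive) (z : E) :
    ‖z‖ ≤ ‖z + P z‖ := by
  rcases (norm_nonneg z).eq_or_lt with hz | hz
  · rw [← hz]; exact norm_nonneg _
  refine le_of_mul_le_mul_left ?_ hz
  calc ‖z‖ * ‖z‖ = RCLike.re (inner 𝕜 z z) := (inner_self_eq_norm_mul_norm z).symm
    _ ≤ RCLike.re (inner 𝕜 z (z + P z)) := by
      rw [inner_add_right, map_add]; linarith [hP.re_inner_nonneg_right z]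
    _ ≤ ‖z‖ * ‖z + P z‖ := re_inner_le_norm _ _

theorem norm_cfcAbs_apply {H : Type*} [NormedAddCommGroup H] [InnerProductSpace ℂ H]
    [CompleteSpace H] (O : H →L[ℂ] H) (x : H) : ‖CFC.abs O x‖ = ‖O x‖ := by
  have hsa : IsSelfAdjoint (CFC.abs O) := (CFC.abs_nonneg O).isSelfAdjoint
  have h : adjoint (CFC.abs O) ∘L CFC.abs O = adjoint O ∘L O := by
    rw [← star_eq_adjoint, hsa.star_eq, ← star_eq_adjoint]; exact CFC.abs_mul_abs O
  rw [← sq_eq_sq₀ (norm_nonneg _) (norm_nonneg _), apply_norm_sq_eq_inner_adjoint_left,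
    apply_norm_sq_eq_inner_adjoint_left, h]

end ContinuousLinearMap

theorem exists_unitary_norm_sub_apply_le {H : Type*} [NormedAddCommGroup H]
    [InnerProductSpace ℂ H] [FiniteDimensional ℂ H] (O : H →L[ℂ] H) :
    ∃ U ∈ unitary (H →L[ℂ] H),
      ∀ x, ‖(U - O) x‖ ≤ ‖(adjoint O ∘L O - ContinuousLinearMap.id ℂ H) x‖ := by
  set P := CFC.abs O
  obtain ⟨U, hU, hUP⟩ : ∃ U ∈ unitary (H →L[ℂ] H), ∀ x, U (P x) = O x :=
    exists_unitary_apply_eq_of_norm_apply_eq (P : H →ₗ[ℂ] H) O (norm_cfcAbs_apply O)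
  have hP : P.IsPositive := (nonneg_iff_isPositive P).mp (CFC.abs_nonneg O)
  have hPP : ∀ x, P (P x) = adjoint O (O x) := fun x => congr($(CFC.abs_mul_abs O) x)
  refine ⟨U, hU, fun x => ?_⟩
  calc ‖(U - O) x‖ = ‖U (x - P x)‖ := by rw [sub_apply, map_sub, hUP]
    _ = ‖x - P x‖ := norm_map_of_mem_unitary hU _
    _ ≤ ‖(x - P x) + P (x - P x)‖ := hP.norm_le_norm_add_apply _
    _ = ‖(adjoint O ∘L O - ContinuousLinearMap.id ℂ H) x‖ := by
        rw [← norm_neg, map_sub, hPP]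
        congr 1
        simp only [sub_apply, comp_apply, coe_id', id_eq]
        abel

theorem exists_unitary_close_on_range_general
    (H K : Type*) [NormedAddCommGroup H] [InnerProductSpace ℂ H] [FiniteDimensional ℂ H]
    [NormedAddCommGroup K] [InnerProductSpace ℂ K]
    (O : H →L[ℂ] H) (V : K →L[ℂ] H) :
    ∃ U : H →L[ℂ] H, U ∈ unitary (H →L[ℂ] H) ∧
      ‖(U - O) ∘L V‖ ≤ ‖(adjoint O ∘L O - ContinuousLinearMap.id ℂ H) ∘L V‖ := by
  obtain ⟨U, hU, hUO⟩ := exists_unitary_norm_sub_apply_le O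
  refine ⟨U, hU, opNorm_le_bound _ (norm_nonneg _) fun k => ?_⟩
  exact (hUO (V k)).trans (le_opNorm ((adjoint O ∘L O - ContinuousLinearMap.id ℂ H) ∘L V) k)

/-- Unitary reconstruction: for any operator `O` and any map `V`, there is a
unitary `U` with `‖(U − O) ∘ V‖ ≤ ‖(O†O − 1) ∘ V‖`. -/
theorem exists_unitary_close_on_range
    (H K : Type*) [NormedAddCommGroup H] [InnerProductSpace ℂ H] [FiniteDimensional ℂ H]
    [NormedAddCommGroup K] [InnerProductSpace ℂ K] [FiniteDimensional ℂ K]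
    (O : H →L[ℂ] H) (V : K →L[ℂ] H) :
    ∃ U : H →L[ℂ] H, U ∈ unitary (H →L[ℂ] H) ∧
      ‖(U - O) ∘L V‖ ≤ ‖(adjoint O ∘L O - ContinuousLinearMap.id ℂ H) ∘L V‖ :=
  exists_unitary_close_on_range_general H K O V
end

section
/- Let H and K be finite-dimensional complex inner product spaces and let V : K → H be a linear map such that ‖V† ∘ V − id_K‖ ≤ η for some 0 ≤ η < 1 (operator norm). Then V† ∘ V is positive definite, the map Ṽ := V ∘ (V† ∘ V)^{-1/2} is a well-defined linear isometry from K to H, and ‖V − Ṽ‖ ≤ η. -/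
open ContinuousLinearMap

/-! With `a = V†V` and `s = √a`: since `‖a - 1‖ < 1`, `a` is invertible, hence so is `s`, and
`‖s x‖ = ‖V x‖` makes `W = V s⁻¹` an isometry. Then `V - W = W (s - 1)`, and
`|√t - 1| ≤ |t - 1|` on the spectrum of `a` gives `‖s - 1‖ ≤ ‖a - 1‖ ≤ η`. -/

lemma Real.abs_sqrt_sub_one_le_abs_sub_one {t : ℝ} (ht : 0 ≤ t) : |√t - 1| ≤ |t - 1| := by
  have hfactor : t - 1 = (√t - 1) * (√t + 1) := by
    nlinarith [Real.sq_sqrt ht]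
  rw [hfactor, abs_mul]
  exact le_mul_of_one_le_right (abs_nonneg _)
    (le_abs.mpr (Or.inl (by linarith [Real.sqrt_nonneg t])))

namespace CFC

variable {A : Type*} [CStarAlgebra A] [PartialOrder A] [StarOrderedRing A]

lemma norm_sqrt_sub_one_le {a : A} (ha : 0 ≤ a) : ‖sqrt a - 1‖ ≤ ‖a - 1‖ := by
  have hsqrt : sqrt a - 1 = cfc (fun t : ℝ ↦ √t - 1) a := by
    rw [sqrt_eq_real_sqrt a ha, cfcₙ_eq_cfc, cfc_sub .., cfc_const_one ℝ a]
  have hsub : a - 1 = cfc (fun t : ℝ ↦ t - 1) a := by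
    rw [cfc_sub .., cfc_id' .., cfc_const_one ℝ a]
  rw [hsqrt]
  refine norm_cfc_le (norm_nonneg _) fun t ht ↦ ?_
  calc ‖√t - 1‖ ≤ ‖t - 1‖ :=
        Real.abs_sqrt_sub_one_le_abs_sub_one (spectrum_nonneg_of_nonneg ha ht)
    _ ≤ ‖a - 1‖ := hsub ▸ norm_apply_le_norm_cfc (fun t : ℝ ↦ t - 1) a ht

end CFC

lemma isUnit_of_norm_sub_one_lt_one {R : Type*} [NormedRing R] [HasSummableGeomSeries R] {x : R}
    (h : ‖x - 1‖ < 1) : IsUnit x := by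
  simpa using isUnit_one_sub_of_norm_lt_one (x := 1 - x) (by rwa [norm_sub_rev])

namespace ContinuousLinearMap

section RCLike

variable {𝕜 E F : Type*} [RCLike 𝕜]
  [NormedAddCommGroup E] [InnerProductSpace 𝕜 E] [CompleteSpace E]
  [NormedAddCommGroup F] [InnerProductSpace 𝕜 F] [CompleteSpace F]

lemma re_inner_adjoint_comp_self_pos (V : E →L[𝕜] F) (hV : Function.Injective V) {x : E}
    (hx : x ≠ 0) : 0 < RCLike.re (inner 𝕜 x ((adjoint V ∘L V) x)) := by
  rw [← apply_norm_sq_eq_inner_adjoint_right]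
  exact pow_pos (norm_pos_iff.mpr ((map_ne_zero_iff V hV).mpr hx)) 2

end RCLike

variable {E F : Type*}
  [NormedAddCommGroup E] [InnerProductSpace ℂ E] [CompleteSpace E]
  [NormedAddCommGroup F] [InnerProductSpace ℂ F] [CompleteSpace F]

lemma adjoint_comp_self_nonneg (V : E →L[ℂ] F) : 0 ≤ adjoint V ∘L V :=
  (nonneg_iff_isPositive _).mpr (isPositive_adjoint_comp_self V)

lemma norm_sqrt_adjoint_comp_self_apply (V : E →L[ℂ] F) (x : E) :
    ‖CFC.sqrt (adjoint V ∘L V) x‖ = ‖V x‖ := by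
  set s := CFC.sqrt (adjoint V ∘L V)
  have hs : adjoint s ∘L s = adjoint V ∘L V := by
    rw [(CFC.sqrt_nonneg _).isSelfAdjoint.adjoint_eq]
    exact CFC.sqrt_mul_sqrt_self _ (adjoint_comp_self_nonneg V)
  rw [← pow_left_inj₀ (norm_nonneg _) (norm_nonneg _) two_ne_zero,
    apply_norm_sq_eq_inner_adjoint_left, apply_norm_sq_eq_inner_adjoint_left, hs]

lemma exists_linearIsometry_comp_sqrt_eq (V : E →L[ℂ] F) (hV : IsUnit (adjoint V ∘L V)) :
    ∃ W : E →ₗᵢ[ℂ] F, W.toContinuousLinearMap ∘L CFC.sqrt (adjoint V ∘L V) = V := by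
  obtain ⟨u, hu⟩ := (CFC.isUnit_sqrt_iff _ (adjoint_comp_self_nonneg V)).mpr hV
  refine ⟨⟨(V ∘L ↑u⁻¹).toLinearMap, fun x ↦ ?_⟩, ?_⟩
  · change ‖V ((↑u⁻¹ : E →L[ℂ] E) x)‖ = ‖x‖
    rw [← norm_sqrt_adjoint_comp_self_apply, ← hu]
    exact congr(‖$(u.mul_inv) x‖)
  · ext x
    change V ((↑u⁻¹ : E →L[ℂ] E) (CFC.sqrt (adjoint V ∘L V) x)) = V x
    rw [← hu]
    exact congr(V ($(u.inv_mul) x))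

end ContinuousLinearMap

theorem approx_isometry_polar_correction_general
    (K H : Type*) [NormedAddCommGroup K] [InnerProductSpace ℂ K] [FiniteDimensional ℂ K]
    [NormedAddCommGroup H] [InnerProductSpace ℂ H] [FiniteDimensional ℂ H]
    (V : K →L[ℂ] H) (η : ℝ) (hη1 : η < 1)
    (h : ‖adjoint V ∘L V - ContinuousLinearMap.id ℂ K‖ ≤ η) :
    (adjoint V ∘L V).IsPositive ∧
    (∀ x : K, x ≠ 0 → 0 < (inner ℂ x ((adjoint V ∘L V) x) : ℂ).re) ∧
    ∃ W : K →ₗᵢ[ℂ] H,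
      W.toContinuousLinearMap ∘L CFC.sqrt (adjoint V ∘L V) = V ∧
      ‖V - W.toContinuousLinearMap‖ ≤ η := by
  have hunit : IsUnit (adjoint V ∘L V) := isUnit_of_norm_sub_one_lt_one (h.trans_lt hη1)
  have hinj : Function.Injective V :=
    .of_comp (f := adjoint V) (isUnit_iff_bijective.mp hunit).injective
  obtain ⟨W, hW⟩ := exists_linearIsometry_comp_sqrt_eq V hunit
  refine ⟨isPositive_adjoint_comp_self V, fun _ ↦ re_inner_adjoint_comp_self_pos V hinj,
    W, hW, ?_⟩
  calc ‖V - W.toContinuousLinearMap‖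
      = ‖W.toContinuousLinearMap ∘L (CFC.sqrt (adjoint V ∘L V) - 1)‖ := by
        rw [comp_sub, hW, one_def, comp_id]
    _ = ‖CFC.sqrt (adjoint V ∘L V) - 1‖ := W.norm_toContinuousLinearMap_comp
    _ ≤ ‖adjoint V ∘L V - 1‖ := CFC.norm_sqrt_sub_one_le (adjoint_comp_self_nonneg V)
    _ ≤ η := h

/-- If `‖V†V − 1‖ ≤ η < 1` then `V†V` is positive definite and
`Ṽ := V (V†V)^{-1/2}` is a well-defined linear isometry with `‖V − Ṽ‖ ≤ η`. -/
theorem approx_isometry_polar_correction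
    (K H : Type*) [NormedAddCommGroup K] [InnerProductSpace ℂ K] [FiniteDimensional ℂ K]
    [NormedAddCommGroup H] [InnerProductSpace ℂ H] [FiniteDimensional ℂ H]
    (V : K →L[ℂ] H) (η : ℝ) (hη : 0 ≤ η) (hη1 : η < 1)
    (h : ‖adjoint V ∘L V - ContinuousLinearMap.id ℂ K‖ ≤ η) :
    (adjoint V ∘L V).IsPositive ∧
    (∀ x : K, x ≠ 0 → 0 < (inner ℂ x ((adjoint V ∘L V) x) : ℂ).re) ∧
    ∃ W : K →ₗᵢ[ℂ] H,
      W.toContinuousLinearMap ∘L CFC.sqrt (adjoint V ∘L V) = V ∧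
      ‖V - W.toContinuousLinearMap‖ ≤ η :=
  approx_isometry_polar_correction_general K H V η hη1 h
end

section
/- Let H and K be complex inner product spaces, let V : K → H be a linear map, let O_L be a linear operator on K and O_P a linear operator on H, and let η ≥ 0. Suppose that for every unit vector ψ ∈ K: (i) ‖V(O_L ψ)‖² ≤ ‖O_L ψ‖² + η, (ii) ‖O_P(Vψ)‖² ≤ ‖O_L ψ‖² + η, and (iii) Re⟪O_P(Vψ), V(O_L ψ)⟫ ≥ ‖O_L ψ‖² − η. Then ‖V ∘ O_L − O_P ∘ V‖ ≤ 2√η in operator norm. -/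
open RCLike in
theorem norm_sub_le_two_sqrt_of_quadratic_estimates {𝕜 E : Type*} [RCLike 𝕜]
    [NormedAddCommGroup E] [InnerProductSpace 𝕜 E] {x y : E} {a η : ℝ}
    (hx : ‖x‖ ^ 2 ≤ a + η) (hy : ‖y‖ ^ 2 ≤ a + η) (hxy : a - η ≤ re (inner 𝕜 x y)) :
    ‖x - y‖ ≤ 2 * √η := by
  have hsq : ‖x - y‖ ^ 2 ≤ 4 * η := by
    rw [@norm_sub_sq 𝕜]
    linarith
  calc ‖x - y‖ = |‖x - y‖| := (abs_norm _).symm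
    _ ≤ √(2 ^ 2 * η) := Real.abs_le_sqrt (by linarith)
    _ = 2 * √η := by rw [Real.sqrt_mul (by positivity), Real.sqrt_sq zero_le_two]

theorem approx_intertwining_of_quadratic_estimates_general
    (K H : Type*) [NormedAddCommGroup K] [InnerProductSpace ℂ K]
    [NormedAddCommGroup H] [InnerProductSpace ℂ H]
    (V : K →L[ℂ] H) (OL : K →L[ℂ] K) (OP : H →L[ℂ] H) (η : ℝ)
    (h1 : ∀ ψ : K, ‖ψ‖ = 1 → ‖V (OL ψ)‖ ^ 2 ≤ ‖OL ψ‖ ^ 2 + η)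
    (h2 : ∀ ψ : K, ‖ψ‖ = 1 → ‖OP (V ψ)‖ ^ 2 ≤ ‖OL ψ‖ ^ 2 + η)
    (h3 : ∀ ψ : K, ‖ψ‖ = 1 → ‖OL ψ‖ ^ 2 - η ≤ (inner ℂ (OP (V ψ)) (V (OL ψ)) : ℂ).re) :
    ‖V ∘L OL - OP ∘L V‖ ≤ 2 * Real.sqrt η := by
  refine ContinuousLinearMap.opNorm_le_of_unit_norm (by positivity) fun ψ hψ => ?_
  rw [show (V ∘L OL - OP ∘L V) ψ = V (OL ψ) - OP (V ψ) from rfl, norm_sub_rev]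
  exact norm_sub_le_two_sqrt_of_quadratic_estimates (𝕜 := ℂ) (h2 ψ hψ) (h1 ψ hψ) (h3 ψ hψ)

/-- Quantitative core of the approximate-reconstruction lemma: three quadratic
estimates imply that the physical operator `O_P` approximately intertwines with
the encoding map `V`, with error `2√η`. -/
theorem approx_intertwining_of_quadratic_estimates
    (K H : Type*) [NormedAddCommGroup K] [InnerProductSpace ℂ K]
    [NormedAddCommGroup H] [InnerProductSpace ℂ H]
    (V : K →L[ℂ] H) (OL : K →L[ℂ] K) (OP : H →L[ℂ] H) (η : ℝ) (hη : 0 ≤ η)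
    (h1 : ∀ ψ : K, ‖ψ‖ = 1 → ‖V (OL ψ)‖ ^ 2 ≤ ‖OL ψ‖ ^ 2 + η)
    (h2 : ∀ ψ : K, ‖ψ‖ = 1 → ‖OP (V ψ)‖ ^ 2 ≤ ‖OL ψ‖ ^ 2 + η)
    (h3 : ∀ ψ : K, ‖ψ‖ = 1 → ‖OL ψ‖ ^ 2 - η ≤ (inner ℂ (OP (V ψ)) (V (OL ψ)) : ℂ).re) :
    ‖V ∘L OL - OP ∘L V‖ ≤ 2 * Real.sqrt η :=
  approx_intertwining_of_quadratic_estimates_general K H V OL OP η h1 h2 h3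
end

section
/- Let H and K be complex inner product spaces, V : K → H a bounded linear map with ‖V‖ ≤ C, let O be a linear operator on K and P a linear operator on H, and let ε ≥ 0. Suppose ‖V ∘ O − P ∘ V‖ ≤ ε and ‖V ∘ O† − P† ∘ V‖ ≤ ε. Then the commutator of P with V ∘ V† satisfies ‖P ∘ (V ∘ V†) − (V ∘ V†) ∘ P‖ ≤ 2Cε. -/
open ContinuousLinearMap

namespace ContinuousLinearMap

variable {𝕜 E F : Type*} [RCLike 𝕜]
  [NormedAddCommGroup E] [InnerProductSpace 𝕜 E] [CompleteSpace E]
  [NormedAddCommGroup F] [InnerProductSpace 𝕜 F] [CompleteSpace F]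

theorem comp_comp_adjoint_sub_eq (V : E →L[𝕜] F) (O : E →L[𝕜] E) (P : F →L[𝕜] F) :
    P ∘L (V ∘L adjoint V) - (V ∘L adjoint V) ∘L P
      = (P ∘L V - V ∘L O) ∘L adjoint V + V ∘L adjoint (V ∘L adjoint O - adjoint P ∘L V) := by
  have hadj : adjoint (V ∘L adjoint O - adjoint P ∘L V) = O ∘L adjoint V - adjoint V ∘L P := by
    simp only [map_sub, adjoint_comp, adjoint_adjoint]
  rw [hadj, sub_comp, comp_sub, ← comp_assoc, ← comp_assoc, ← comp_assoc]
  abel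

theorem norm_comp_comp_adjoint_sub_le (V : E →L[𝕜] F) (O : E →L[𝕜] E) (P : F →L[𝕜] F) :
    ‖P ∘L (V ∘L adjoint V) - (V ∘L adjoint V) ∘L P‖
      ≤ ‖V‖ * (‖V ∘L O - P ∘L V‖ + ‖V ∘L adjoint O - adjoint P ∘L V‖) := by
  have norm_adjoint (A : E →L[𝕜] F) : ‖adjoint A‖ = ‖A‖ := LinearIsometryEquiv.norm_map _ _
  rw [comp_comp_adjoint_sub_eq V O P]
  calc _ ≤ ‖(P ∘L V - V ∘L O) ∘L adjoint V‖
          + ‖V ∘L adjoint (V ∘L adjoint O - adjoint P ∘L V)‖ := norm_add_le _ _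
    _ ≤ ‖P ∘L V - V ∘L O‖ * ‖adjoint V‖
          + ‖V‖ * ‖adjoint (V ∘L adjoint O - adjoint P ∘L V)‖ :=
        add_le_add (opNorm_comp_le _ _) (opNorm_comp_le _ _)
    _ = ‖V‖ * (‖V ∘L O - P ∘L V‖ + ‖V ∘L adjoint O - adjoint P ∘L V‖) := by
        rw [norm_adjoint, norm_adjoint, norm_sub_rev]
        ring

end ContinuousLinearMap

theorem approx_commutes_with_codespace_projector_general
    (K H : Type*) [NormedAddCommGroup K] [InnerProductSpace ℂ K] [CompleteSpace K]
    [NormedAddCommGroup H] [InnerProductSpace ℂ H] [CompleteSpace H]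
    (V : K →L[ℂ] H) (C : ℝ) (hV : ‖V‖ ≤ C)
    (O : K →L[ℂ] K) (P : H →L[ℂ] H) (ε : ℝ)
    (h1 : ‖V ∘L O - P ∘L V‖ ≤ ε)
    (h2 : ‖V ∘L adjoint O - adjoint P ∘L V‖ ≤ ε) :
    ‖P ∘L (V ∘L adjoint V) - (V ∘L adjoint V) ∘L P‖ ≤ 2 * C * ε := by
  calc _ ≤ ‖V‖ * (‖V ∘L O - P ∘L V‖ + ‖V ∘L adjoint O - adjoint P ∘L V‖) :=
        norm_comp_comp_adjoint_sub_le V O P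
    _ ≤ C * (ε + ε) :=
        mul_le_mul hV (add_le_add h1 h2) (by positivity) ((norm_nonneg V).trans hV)
    _ = 2 * C * ε := by ring

/-- An operator that approximately implements a logical operator (and whose
adjoint approximately implements the adjoint logical operator) approximately
commutes with the code-space projector `V ∘ V†`. -/
theorem approx_commutes_with_codespace_projector
    (K H : Type*) [NormedAddCommGroup K] [InnerProductSpace ℂ K] [CompleteSpace K]
    [NormedAddCommGroup H] [InnerProductSpace ℂ H] [CompleteSpace H]
    (V : K →L[ℂ] H) (C : ℝ) (hV : ‖V‖ ≤ C)
    (O : K →L[ℂ] K) (P : H →L[ℂ] H) (ε : ℝ) (hε : 0 ≤ ε)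
    (h1 : ‖V ∘L O - P ∘L V‖ ≤ ε)
    (h2 : ‖V ∘L adjoint O - adjoint P ∘L V‖ ≤ ε) :
    ‖P ∘L (V ∘L adjoint V) - (V ∘L adjoint V) ∘L P‖ ≤ 2 * C * ε :=
  approx_commutes_with_codespace_projector_general K H V C hV O P ε h1 h2
end

section
/- Let A, B, C be normed vector spaces over ℂ and consider continuous linear maps ℰ, 𝒞₀ : A → B; 𝒰, 𝒱 : B → B; 𝒞_τ : C → B; 𝒰_L : A → C; and ℛ : B → C. Suppose ‖ℛ‖ ≤ 1, ‖𝒱‖ ≤ 1, ‖𝒞₀‖ ≤ 1, ‖𝒰_L‖ ≤ 1, and that ‖ℰ − 𝒞₀‖ ≤ ε_enc, ‖ℛ ∘ 𝒞_τ − id_C‖ ≤ ε_rec, ‖𝒰 ∘ 𝒞₀ − 𝒞_τ ∘ 𝒰_L‖ ≤ ε_dyn, and ‖𝒱 − 𝒰‖ ≤ ε_spread. Then ‖ℛ ∘ 𝒱 ∘ ℰ − 𝒰_L‖ ≤ ε_enc + ε_rec + ε_dyn + ε_spread. -/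
/-!
Telescope the error `ℛ𝒱ℰ - 𝒰_L` through the ideal encodings `𝒞₀` and `𝒞_τ` into the encoding,
spreading, dynamical and recovery errors, each pre- and post-composed with contractions. Since
composing with a contraction does not increase the operator norm, the triangle inequality gives
the bound.
-/

namespace ContinuousLinearMap

variable {𝕜 E F G : Type*} [NontriviallyNormedField 𝕜]
  [SeminormedAddCommGroup E] [NormedSpace 𝕜 E]
  [SeminormedAddCommGroup F] [NormedSpace 𝕜 F]
  [SeminormedAddCommGroup G] [NormedSpace 𝕜 G]

theorem opNorm_comp_le_of_opNorm_le_one_left {g : F →L[𝕜] G} {f : E →L[𝕜] F} {ε : ℝ}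
    (hg : ‖g‖ ≤ 1) (hf : ‖f‖ ≤ ε) : ‖g ∘L f‖ ≤ ε :=
  calc ‖g ∘L f‖ ≤ ‖g‖ * ‖f‖ := opNorm_comp_le g f
    _ ≤ 1 * ε := mul_le_mul hg hf (norm_nonneg f) zero_le_one
    _ = ε := one_mul ε

theorem opNorm_comp_le_of_opNorm_le_one_right {g : F →L[𝕜] G} {f : E →L[𝕜] F} {ε : ℝ}
    (hf : ‖f‖ ≤ 1) (hg : ‖g‖ ≤ ε) : ‖g ∘L f‖ ≤ ε :=
  calc ‖g ∘L f‖ ≤ ‖g‖ * ‖f‖ := opNorm_comp_le g f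
    _ ≤ ε * 1 := mul_le_mul hg hf (norm_nonneg f) ((norm_nonneg g).trans hg)
    _ = ε := mul_one ε

theorem comp_comp_sub_eq_telescope (ℰ 𝒞₀ : E →L[𝕜] F) (𝒰 𝒱 : F →L[𝕜] F) (𝒞τ : G →L[𝕜] F)
    (𝒰L : E →L[𝕜] G) (ℛ : F →L[𝕜] G) :
    ℛ ∘L 𝒱 ∘L ℰ - 𝒰L =
      (ℛ ∘L 𝒱) ∘L (ℰ - 𝒞₀) + ℛ ∘L (𝒱 - 𝒰) ∘L 𝒞₀ + ℛ ∘L (𝒰 ∘L 𝒞₀ - 𝒞τ ∘L 𝒰L) +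
        (ℛ ∘L 𝒞τ - ContinuousLinearMap.id 𝕜 G) ∘L 𝒰L := by
  ext x
  simp only [sub_apply, add_apply, comp_apply, map_sub]
  abel

end ContinuousLinearMap

open ContinuousLinearMap in
/-- Error-tracking bound for the extracted non-local computation protocol:
telescoping the encoding, spread, dynamical, and recovery errors. -/
theorem error_tracking_bound
    (A B C : Type*) [NormedAddCommGroup A] [NormedSpace ℂ A]
    [NormedAddCommGroup B] [NormedSpace ℂ B]
    [NormedAddCommGroup C] [NormedSpace ℂ C]
    (ℰ 𝒞₀ : A →L[ℂ] B) (𝒰 𝒱 : B →L[ℂ] B) (𝒞τ : C →L[ℂ] B)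
    (𝒰L : A →L[ℂ] C) (ℛ : B →L[ℂ] C)
    (εenc εrec εdyn εspread : ℝ)
    (hR : ‖ℛ‖ ≤ 1) (hV : ‖𝒱‖ ≤ 1) (hC0 : ‖𝒞₀‖ ≤ 1) (hUL : ‖𝒰L‖ ≤ 1)
    (henc : ‖ℰ - 𝒞₀‖ ≤ εenc)
    (hrec : ‖ℛ ∘L 𝒞τ - ContinuousLinearMap.id ℂ C‖ ≤ εrec)
    (hdyn : ‖𝒰 ∘L 𝒞₀ - 𝒞τ ∘L 𝒰L‖ ≤ εdyn)
    (hspread : ‖𝒱 - 𝒰‖ ≤ εspread) :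
    ‖ℛ ∘L 𝒱 ∘L ℰ - 𝒰L‖ ≤ εenc + εrec + εdyn + εspread := by
  rw [comp_comp_sub_eq_telescope ℰ 𝒞₀ 𝒰 𝒱 𝒞τ 𝒰L ℛ]
  have h_enc : ‖(ℛ ∘L 𝒱) ∘L (ℰ - 𝒞₀)‖ ≤ εenc :=
    opNorm_comp_le_of_opNorm_le_one_left (opNorm_comp_le_of_opNorm_le_one_left hR hV) henc
  have h_spread : ‖ℛ ∘L (𝒱 - 𝒰) ∘L 𝒞₀‖ ≤ εspread :=
    opNorm_comp_le_of_opNorm_le_one_left hR (opNorm_comp_le_of_opNorm_le_one_right hC0 hspread)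
  have h_dyn : ‖ℛ ∘L (𝒰 ∘L 𝒞₀ - 𝒞τ ∘L 𝒰L)‖ ≤ εdyn :=
    opNorm_comp_le_of_opNorm_le_one_left hR hdyn
  have h_rec : ‖(ℛ ∘L 𝒞τ - ContinuousLinearMap.id ℂ C) ∘L 𝒰L‖ ≤ εrec :=
    opNorm_comp_le_of_opNorm_le_one_right hUL hrec
  exact norm_add₄_le.trans (by linarith)
end

section
/- Let m and n be nonempty finite types and let K be a complex matrix indexed by m × n (i.e. K : Matrix (m × n) (m × n) ℂ). Define the normalized partial trace over the first factor L : Matrix n n ℂ by L j j' = (1 / card m) · Σ_{i ∈ m} K (i,j) (i,j'), and let K̃ := 1_m ⊗ L be the Kronecker product of the m × m identity with L (indexed by m × n). Then, with respect to the ℓ²-operator norm on matrices, ‖K̃ − K‖ ≤ sup over U in the unitary group of m × m complex matrices of ‖(U ⊗ 1_n) · K − K · (U ⊗ 1_n)‖. -/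
open Matrix
open scoped Kronecker

/-!
The Haar average is replaced by the uniform average over the finite family of signed shifts
`U_{σ,a} i p = σ p · [p = i + a]`, for a group law on `m` and signs `σ : m → ℤˣ`.
This family reproduces the Haar average of `U i p * conj (U i' p')`, namely
`[i = i'] [p = p'] / card m`, since averaging over the signs
kills `p ≠ p'` and the shift `a` is then determined by `i` and `p`. Hence the average of
`(U ⊗ 1) K (U ⊗ 1)ᴴ` is `1 ⊗ L`, and writing each `(U ⊗ 1) K (U ⊗ 1)ᴴ - K` as
`[U ⊗ 1, K] (U ⊗ 1)ᴴ`, unitary invariance of the norm bounds `‖1 ⊗ L - K‖` by the largest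
commutator norm in the family.
-/

/-- The ℓ²-operator norm of a square complex matrix (its largest singular value),
realized as the operator norm of the associated Euclidean continuous linear map. -/
noncomputable def l2OpNorm' {ι : Type*} [Fintype ι] [DecidableEq ι]
    (M : Matrix ι ι ℂ) : ℝ :=
  ‖Matrix.toEuclideanCLM (𝕜 := ℂ) M‖

open scoped Matrix.Norms.L2Operator

theorem CStarRing.norm_mul_sub_mul_le_of_mem_unitary {A : Type*} [NormedRing A] [StarRing A]
    [CStarRing A] {u : A} (hu : u ∈ unitary A) (x : A) : ‖u * x - x * u‖ ≤ 2 * ‖x‖ :=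
  calc ‖u * x - x * u‖ ≤ ‖u * x‖ + ‖x * u‖ := norm_sub_le _ _
    _ = 2 * ‖x‖ := by
      rw [CStarRing.norm_mem_unitary_mul x hu, CStarRing.norm_mul_mem_unitary x hu, two_mul]

theorem CStarRing.norm_sub_le_of_sum_unitary_conj {A ι : Type*} [NormedRing A] [StarRing A]
    [CStarRing A] [NormedSpace ℝ A] [Fintype ι] [Nonempty ι] {u : ι → A}
    (hu : ∀ k, u k ∈ unitary A) {x y : A}
    (htwirl : ∑ k, u k * x * star (u k) = Fintype.card ι • y) {C : ℝ}
    (hC : ∀ k, ‖u k * x - x * u k‖ ≤ C) : ‖y - x‖ ≤ C := by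
  have hsum : Fintype.card ι • (y - x) = ∑ k, (u k * x - x * u k) * star (u k) := by
    rw [smul_sub, ← htwirl, ← Finset.card_univ, ← Finset.sum_const, ← Finset.sum_sub_distrib]
    refine Finset.sum_congr rfl fun k _ => ?_
    rw [sub_mul, mul_assoc x, Unitary.mul_star_self_of_mem (hu k), mul_one]
  refine le_of_mul_le_mul_left ?_ (Nat.cast_pos.mpr (Fintype.card_pos (α := ι)))
  calc (Fintype.card ι : ℝ) * ‖y - x‖ = ‖Fintype.card ι • (y - x)‖ := by
        rw [RCLike.norm_nsmul ℝ, nsmul_eq_mul]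
    _ ≤ ∑ k, ‖(u k * x - x * u k) * star (u k)‖ := hsum ▸ norm_sum_le _ _
    _ = ∑ k, ‖u k * x - x * u k‖ := Finset.sum_congr rfl fun k _ =>
        CStarRing.norm_mul_mem_unitary _ (Unitary.star_mem (hu k))
    _ ≤ ∑ _k : ι, C := Finset.sum_le_sum fun k _ => hC k
    _ = Fintype.card ι * C := by simp

theorem sum_units_int_apply_mul_apply {m : Type*} [Fintype m] [DecidableEq m] (p p' : m) :
    ∑ σ : m → ℤˣ, ((σ p * σ p' : ℤˣ) : ℤ) = if p = p' then 2 ^ Fintype.card m else 0 := by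
  split_ifs with hp
  · subst hp
    simp [Int.units_mul_self, Fintype.card_units_int]
  · -- flipping the sign at `p` negates every summand
    have hflip := Equiv.sum_comp (Equiv.mulLeft (Pi.mulSingle p (-1) : m → ℤˣ))
      fun σ => ((σ p * σ p' : ℤˣ) : ℤ)
    simp only [Equiv.coe_mulLeft, Pi.mul_apply, Pi.mulSingle_eq_same,
      Pi.mulSingle_eq_of_ne' hp, neg_mul, one_mul, Units.val_neg,
      Finset.sum_neg_distrib] at hflip
    exact self_eq_neg.mp hflip.symm

namespace Matrix

section PartialTrace

variable {m n R : Type*} [Fintype m] [Fintype n]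

def partialTraceLeft [AddCommMonoid R] (K : Matrix (m × n) (m × n) R) : Matrix n n R :=
  of fun j j' => ∑ i, K (i, j) (i, j')

variable [DecidableEq n] [CommSemiring R] [StarRing R]

theorem kronecker_one_mul_mul_conjTranspose_apply (U : Matrix m m R)
    (K : Matrix (m × n) (m × n) R) (i i' : m) (j j' : n) :
    ((U ⊗ₖ (1 : Matrix n n R)) * K * (U ⊗ₖ (1 : Matrix n n R))ᴴ) (i, j) (i', j') =
      ∑ p, ∑ p', U i p * K (p, j) (p', j') * star (U i' p') := by
  simp only [mul_apply, Fintype.sum_prod_type, kroneckerMap_apply, conjTranspose_apply,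
    one_apply, mul_ite, ite_mul, mul_one, mul_zero, zero_mul, star_zero, apply_ite (star : R → R),
    Finset.sum_ite_eq, Finset.mem_univ, if_true, Finset.sum_mul]
  exact Finset.sum_comm

theorem sum_kronecker_one_mul_mul_conjTranspose {ι : Type*} [Fintype ι] [DecidableEq m]
    {U : ι → Matrix m m R} {c : R}
    (hU : ∀ i i' p p', ∑ k, U k i p * star (U k i' p') = if i = i' ∧ p = p' then c else 0)
    (K : Matrix (m × n) (m × n) R) :
    ∑ k, (U k ⊗ₖ (1 : Matrix n n R)) * K * (U k ⊗ₖ (1 : Matrix n n R))ᴴ =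
      c • ((1 : Matrix m m R) ⊗ₖ partialTraceLeft K) := by
  ext ⟨i, j⟩ ⟨i', j'⟩
  rw [sum_apply]
  calc ∑ k, ((U k ⊗ₖ (1 : Matrix n n R)) * K * (U k ⊗ₖ (1 : Matrix n n R))ᴴ) (i, j) (i', j')
      = ∑ p, ∑ p', K (p, j) (p', j') * ∑ k, U k i p * star (U k i' p') := by
        simp only [kronecker_one_mul_mul_conjTranspose_apply, Finset.mul_sum]
        rw [Finset.sum_comm]
        refine Finset.sum_congr rfl fun p _ => ?_
        rw [Finset.sum_comm]
        simp only [mul_left_comm, mul_assoc]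
    _ = _ := by
        simp only [hU, mul_ite, mul_zero, smul_apply, kroneckerMap_apply, one_apply,
          partialTraceLeft, of_apply]
        rcases eq_or_ne i i' with rfl | hi
        · simp [Finset.mul_sum, mul_comm]
        · simp [hi]

end PartialTrace

section SignedShift

variable {m R : Type*} [DecidableEq m] [AddGroup m]

def signedShift [Ring R] (σ : m → ℤˣ) (a : m) : Matrix m m R :=
  of fun i p => if p = i + a then ((σ p : ℤ) : R) else 0

variable [CommRing R] [StarRing R]

theorem signedShift_apply_mul_star_apply (σ : m → ℤˣ) (a i i' p p' : m) :
    signedShift σ a i p * star (signedShift σ a i' p' : R) =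
      if p = i + a ∧ p' = i' + a then (((σ p * σ p' : ℤˣ) : ℤ) : R) else 0 := by
  by_cases hp : p = i + a <;> by_cases hp' : p' = i' + a <;> simp [signedShift, hp, hp']

variable [Fintype m]

theorem signedShift_mem_unitaryGroup (σ : m → ℤˣ) (a : m) :
    signedShift σ a ∈ unitaryGroup m R := by
  rw [mem_unitaryGroup_iff]
  ext i i'
  simp only [mul_apply, star_apply, signedShift, of_apply, one_apply, apply_ite (star : R → R),
    star_intCast, star_zero, mul_ite, ite_mul, mul_zero, zero_mul, Finset.sum_ite_eq',
    Finset.mem_univ, if_true, add_left_inj, eq_comm (a := i')]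
  rw [← Int.cast_mul, Int.units_coe_mul_self, Int.cast_one]

theorem sum_signedShift_mul_star (i i' p p' : m) :
    ∑ k : (m → ℤˣ) × m, signedShift k.1 k.2 i p * star (signedShift k.1 k.2 i' p' : R) =
      if i = i' ∧ p = p' then 2 ^ Fintype.card m else 0 := by
  simp only [Fintype.sum_prod_type, signedShift_apply_mul_star_apply]
  rw [Finset.sum_comm]
  simp only [Finset.sum_ite_irrel, Finset.sum_const_zero, ← Int.cast_sum,
    sum_units_int_apply_mul_apply]
  rcases eq_or_ne p p' with rfl | hp
  · by_cases hi : i = i'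
    · subst hi
      have hshift : ∀ a, p = i + a ↔ a = -i + p := fun a => by
        rw [eq_neg_add_iff_add_eq, eq_comm]
      simp [hshift]
    · have hne : ∀ a, ¬(p = i + a ∧ p = i' + a) := fun a ⟨h, h'⟩ =>
        hi (add_right_cancel (h.symm.trans h'))
      simp [hi, hne]
  · simp [hp]

end SignedShift

end Matrix

theorem partial_trace_twirl_bound_general
    (m n : Type*) [Fintype m] [DecidableEq m] [Nonempty m]
    [Fintype n] [DecidableEq n]
    (K : Matrix (m × n) (m × n) ℂ)
    (L : Matrix n n ℂ)
    (hL : ∀ j j' : n, L j j' = (1 / (Fintype.card m : ℂ)) * ∑ i : m, K (i, j) (i, j')) :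
    l2OpNorm' ((1 : Matrix m m ℂ) ⊗ₖ L - K)
      ≤ ⨆ U : Matrix.unitaryGroup m ℂ,
          l2OpNorm' (((U : Matrix m m ℂ) ⊗ₖ (1 : Matrix n n ℂ)) * K
            - K * ((U : Matrix m m ℂ) ⊗ₖ (1 : Matrix n n ℂ))) := by
  have : NeZero (Fintype.card m) := ⟨Fintype.card_ne_zero⟩
  -- any group law on `m` will do: the shifts only need to act simply transitively
  let : AddGroup m := (Fintype.equivFin m).addGroup
  have hV : ∀ k : (m → ℤˣ) × m, signedShift k.1 k.2 ⊗ₖ (1 : Matrix n n ℂ) ∈ unitary _ :=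
    fun k => kronecker_mem_unitary (signedShift_mem_unitaryGroup k.1 k.2) (one_mem _)
  have htrace : partialTraceLeft K = (Fintype.card m : ℂ) • L := by
    ext j j'
    simp only [partialTraceLeft, of_apply, Matrix.smul_apply, hL, smul_eq_mul]
    field_simp
  have htwirl : ∑ k : (m → ℤˣ) × m, (signedShift k.1 k.2 ⊗ₖ (1 : Matrix n n ℂ)) * K *
      (signedShift k.1 k.2 ⊗ₖ (1 : Matrix n n ℂ))ᴴ =
        Fintype.card ((m → ℤˣ) × m) • ((1 : Matrix m m ℂ) ⊗ₖ L) := by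
    rw [sum_kronecker_one_mul_mul_conjTranspose sum_signedShift_mul_star, htrace, kronecker_smul,
      smul_smul, ← Nat.cast_smul_eq_nsmul ℂ]
    simp [Fintype.card_prod, Fintype.card_units_int]
  have hbdd : BddAbove (Set.range fun U : unitaryGroup m ℂ =>
      l2OpNorm' (((U : Matrix m m ℂ) ⊗ₖ (1 : Matrix n n ℂ)) * K
        - K * ((U : Matrix m m ℂ) ⊗ₖ (1 : Matrix n n ℂ)))) := by
    refine ⟨2 * ‖K‖, ?_⟩
    rintro _ ⟨U, rfl⟩
    have hU := kronecker_mem_unitary U.2 (one_mem (unitary (Matrix n n ℂ)))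
    exact CStarRing.norm_mul_sub_mul_le_of_mem_unitary hU K
  exact CStarRing.norm_sub_le_of_sum_unitary_conj hV htwirl fun k =>
    le_ciSup hbdd ⟨signedShift k.1 k.2, signedShift_mem_unitaryGroup k.1 k.2⟩

/-- Twirling bound: the distance from `K` to `1 ⊗ (normalized partial trace of K)`
is at most the supremum over unitaries `U` of the commutator norm `‖[U ⊗ 1, K]‖`. -/
theorem partial_trace_twirl_bound
    (m n : Type*) [Fintype m] [DecidableEq m] [Nonempty m]
    [Fintype n] [DecidableEq n] [Nonempty n]
    (K : Matrix (m × n) (m × n) ℂ)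
    (L : Matrix n n ℂ)
    (hL : ∀ j j' : n, L j j' = (1 / (Fintype.card m : ℂ)) * ∑ i : m, K (i, j) (i, j')) :
    l2OpNorm' ((1 : Matrix m m ℂ) ⊗ₖ L - K)
      ≤ ⨆ U : Matrix.unitaryGroup m ℂ,
          l2OpNorm' (((U : Matrix m m ℂ) ⊗ₖ (1 : Matrix n n ℂ)) * K
            - K * ((U : Matrix m m ℂ) ⊗ₖ (1 : Matrix n n ℂ))) :=
  partial_trace_twirl_bound_general m n K L hL
end

section
/- Let v₀ = (1,1,1)/√3, v₁ = (1,−1,−1)/√3, v₂ = (−1,1,−1)/√3, v₃ = (−1,−1,1)/√3 be the vertices of a regular tetrahedron inscribed in the unit sphere of ℝ³, and define the spherical (geodesic) distance between unit vectors x, y as d(x,y) = arccos⟪x,y⟫. Then for every unit vector x ∈ ℝ³: max(d(x,v₀), d(x,v₁)) + max(d(x,v₂), d(x,v₃)) ≥ π. -/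
/-- Geodesic (spherical) distance between points of the unit sphere in ℝ³. -/
noncomputable def sphDist (x y : EuclideanSpace ℝ (Fin 3)) : ℝ :=
  Real.arccos (inner ℝ x y)

/-- Vertices of a regular tetrahedron inscribed in the unit sphere. -/
noncomputable def tetra₀ : EuclideanSpace ℝ (Fin 3) := (Real.sqrt 3)⁻¹ • !₂[1, 1, 1]
noncomputable def tetra₁ : EuclideanSpace ℝ (Fin 3) := (Real.sqrt 3)⁻¹ • !₂[1, -1, -1]
noncomputable def tetra₂ : EuclideanSpace ℝ (Fin 3) := (Real.sqrt 3)⁻¹ • !₂[-1, 1, -1]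
noncomputable def tetra₃ : EuclideanSpace ℝ (Fin 3) := (Real.sqrt 3)⁻¹ • !₂[-1, -1, 1]

open Real
open scoped InnerProductSpace

theorem pi_le_arccos_add_arccos {a b : ℝ} (h : a + b ≤ 0) : π ≤ arccos a + arccos b := by
  have : arccos (-b) ≤ arccos a := arccos_le_arccos (by linarith)
  rw [arccos_neg] at this
  linarith

theorem pi_le_max_arccos_add_max_arccos {E : Type*} [NormedAddCommGroup E] [InnerProductSpace ℝ E]
    {v₀ v₁ v₂ v₃ : E} (hsum : v₀ + v₁ + v₂ + v₃ = 0) (x : E) :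
    π ≤ max (arccos ⟪x, v₀⟫_ℝ) (arccos ⟪x, v₁⟫_ℝ) + max (arccos ⟪x, v₂⟫_ℝ) (arccos ⟪x, v₃⟫_ℝ) := by
  have hpairs : (⟪x, v₀⟫_ℝ + ⟪x, v₂⟫_ℝ) + (⟪x, v₁⟫_ℝ + ⟪x, v₃⟫_ℝ) = 0 := by
    simpa only [inner_add_right, inner_zero_right, add_comm, add_left_comm, add_assoc]
      using congrArg (⟪x, ·⟫_ℝ) hsum
  rcases le_or_gt (⟪x, v₀⟫_ℝ + ⟪x, v₂⟫_ℝ) 0 with hnonpos | hpos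
  · exact (pi_le_arccos_add_arccos hnonpos).trans (add_le_add (le_max_left _ _) (le_max_left _ _))
  · exact (pi_le_arccos_add_arccos (by linarith)).trans
      (add_le_add (le_max_right _ _) (le_max_right _ _))

theorem tetra_sum_eq_zero : tetra₀ + tetra₁ + tetra₂ + tetra₃ = 0 := by
  ext i
  fin_cases i <;> simp [tetra₀, tetra₁, tetra₂, tetra₃]

/-- For every point `x` of the unit sphere,
`max(d(x,v₀), d(x,v₁)) + max(d(x,v₂), d(x,v₃)) ≥ π` for the tetrahedron vertices. -/
theorem tetrahedron_causal_discrepancy :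
    ∀ x : EuclideanSpace ℝ (Fin 3), ‖x‖ = 1 →
      Real.pi ≤ max (sphDist x tetra₀) (sphDist x tetra₁)
        + max (sphDist x tetra₂) (sphDist x tetra₃) :=
  fun x _ ↦ pi_le_max_arccos_add_max_arccos tetra_sum_eq_zero x
end

section
/- Let H and K be finite-dimensional complex inner product spaces, let O : H → H be a linear operator, let V : K → H be a linear map, let W be a unitary operator on K, and let ε ≥ 0 satisfy ‖V ∘ W − O ∘ V‖ ≤ ε. Then there exists a unitary operator U on H such that ‖V ∘ W − U ∘ V‖ ≤ ε + ‖(O† ∘ O − id_H) ∘ V‖. -/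
/-!
Polar decomposition: `O = U |O|` with `U` unitary and `|O| = √(O† O)`, because `|O|` and `O` have
the same norm at every vector. For positive `P` and `y = (P - 1) x` one has
`‖y‖ ≤ ‖P y + y‖ = ‖(P² - 1) x‖`, so on the code space `‖(O - U) v‖ = ‖(|O| - 1) v‖` is bounded
by `‖(O† O - 1) v‖`; the triangle inequality through `O ∘ V` finishes the proof.
-/

open ContinuousLinearMap

namespace ContinuousLinearMap

section Norm

variable {𝕜 E F G : Type*} [NontriviallyNormedField 𝕜]
  [SeminormedAddCommGroup E] [NormedSpace 𝕜 E] [SeminormedAddCommGroup F] [NormedSpace 𝕜 F]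
  [SeminormedAddCommGroup G] [NormedSpace 𝕜 G]

theorem opNorm_comp_le_of_norm_apply_le {A B : F →L[𝕜] G} (h : ∀ y, ‖A y‖ ≤ ‖B y‖)
    (V : E →L[𝕜] F) : ‖A ∘L V‖ ≤ ‖B ∘L V‖ :=
  opNorm_le_bound _ (norm_nonneg _) fun x => (h (V x)).trans ((B ∘L V).le_opNorm x)

end Norm

variable {𝕜 E F G : Type*} [RCLike 𝕜]
  [NormedAddCommGroup E] [InnerProductSpace 𝕜 E] [NormedAddCommGroup F] [InnerProductSpace 𝕜 F]
  [NormedAddCommGroup G] [InnerProductSpace 𝕜 G]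

theorem norm_apply_eq_of_adjoint_comp_self_eq [CompleteSpace E] [CompleteSpace F] [CompleteSpace G]
    {A : E →L[𝕜] F} {B : E →L[𝕜] G} (h : adjoint A ∘L A = adjoint B ∘L B) (x : E) :
    ‖A x‖ = ‖B x‖ := by
  rw [← sq_eq_sq₀ (norm_nonneg _) (norm_nonneg _), apply_norm_sq_eq_inner_adjoint_left,
    apply_norm_sq_eq_inner_adjoint_left, h]

theorem IsPositive.norm_le_norm_apply_add {T : E →L[𝕜] E} (hT : T.IsPositive) (x : E) :
    ‖x‖ ≤ ‖T x + x‖ := by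
  have hsq := norm_add_sq (𝕜 := 𝕜) (T x) x
  nlinarith [hT.re_inner_nonneg_left x, sq_nonneg ‖T x‖, norm_nonneg (T x + x), norm_nonneg x]

theorem IsPositive.norm_apply_sub_le {T : E →L[𝕜] E} (hT : T.IsPositive) (x : E) :
    ‖T x - x‖ ≤ ‖T (T x) - x‖ := by
  have hfactor : T (T x) - x = T (T x - x) + (T x - x) := by
    rw [map_sub]
    abel
  rw [hfactor]
  exact hT.norm_le_norm_apply_add _

end ContinuousLinearMap

section Polar

variable {𝕜 E H : Type*} [RCLike 𝕜] [AddCommGroup E] [Module 𝕜 E]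
  [NormedAddCommGroup H] [InnerProductSpace 𝕜 H]

theorem LinearMap.exists_linearIsometry_range_apply_eq {P T : E →ₗ[𝕜] H}
    (h : ∀ x, ‖P x‖ = ‖T x‖) :
    ∃ L : LinearMap.range P →ₗᵢ[𝕜] H, ∀ x, L ⟨P x, LinearMap.mem_range_self P x⟩ = T x := by
  have hker : LinearMap.ker P ≤ LinearMap.ker T := fun x hx => by
    rw [LinearMap.mem_ker, ← norm_eq_zero, ← h x, LinearMap.mem_ker.mp hx, norm_zero]
  let L : LinearMap.range P →ₗ[𝕜] H :=
    (LinearMap.ker P).liftQ T hker ∘ₗ P.quotKerEquivRange.symm.toLinearMap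
  have hL : ∀ x, L ⟨P x, LinearMap.mem_range_self P x⟩ = T x := fun x => by
    have hpre : P.quotKerEquivRange.symm ⟨P x, LinearMap.mem_range_self P x⟩ =
        Submodule.Quotient.mk x := by
      rw [LinearEquiv.symm_apply_eq]
      rfl
    simp [L, hpre]
  refine ⟨⟨L, ?_⟩, hL⟩
  rintro ⟨_, x, rfl⟩
  rw [hL, Submodule.coe_norm, h]

theorem LinearMap.exists_linearIsometryEquiv_apply_eq [FiniteDimensional 𝕜 H] {P T : E →ₗ[𝕜] H}
    (h : ∀ x, ‖P x‖ = ‖T x‖) : ∃ U : H ≃ₗᵢ[𝕜] H, ∀ x, U (P x) = T x := by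
  obtain ⟨L, hL⟩ := P.exists_linearIsometry_range_apply_eq h
  exact ⟨L.extend.toLinearIsometryEquiv rfl, fun x => (L.extend_apply _).trans (hL x)⟩

end Polar

theorem ContinuousLinearMap.exists_mem_unitary_opNorm_sub_comp_le
    {E H : Type*} [NormedAddCommGroup E] [NormedSpace ℂ E]
    [NormedAddCommGroup H] [InnerProductSpace ℂ H] [FiniteDimensional ℂ H]
    (O : H →L[ℂ] H) (V : E →L[ℂ] H) :
    ∃ U ∈ unitary (H →L[ℂ] H),
      ‖(O - U) ∘L V‖ ≤ ‖(adjoint O ∘L O - ContinuousLinearMap.id ℂ H) ∘L V‖ := by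
  have := FiniteDimensional.complete ℂ H
  set A := CFC.abs O
  have hA : A.IsPositive := (nonneg_iff_isPositive A).mp (CFC.abs_nonneg O)
  have hAA : A ∘L A = adjoint O ∘L O := CFC.abs_mul_abs O
  have hAO : ∀ x, ‖A x‖ = ‖O x‖ := norm_apply_eq_of_adjoint_comp_self_eq <| by
    rw [← star_eq_adjoint, hA.isSelfAdjoint.star_eq, ← hAA]
  obtain ⟨e, hpolar⟩ := LinearMap.exists_linearIsometryEquiv_apply_eq (P := (A : H →ₗ[ℂ] H)) hAO
  refine ⟨e, (Unitary.linearIsometryEquiv.symm e).2,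
    opNorm_comp_le_of_norm_apply_le (fun x => ?_) V⟩
  calc ‖(O - e) x‖ = ‖e (A x - x)‖ := by rw [map_sub]; exact congr(‖$(hpolar x) - e x‖).symm
    _ = ‖A x - x‖ := e.norm_map _
    _ ≤ ‖A (A x) - x‖ := hA.norm_apply_sub_le x
    _ = ‖(adjoint O ∘L O - ContinuousLinearMap.id ℂ H) x‖ := by
      rw [← hAA]
      rfl

theorem exists_unitary_approx_implementation_general
    (H K : Type*) [NormedAddCommGroup H] [InnerProductSpace ℂ H] [FiniteDimensional ℂ H]
    [NormedAddCommGroup K] [InnerProductSpace ℂ K]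
    (O : H →L[ℂ] H) (V : K →L[ℂ] H) (W : K →L[ℂ] K)
    (ε : ℝ) (h : ‖V ∘L W - O ∘L V‖ ≤ ε) :
    ∃ U : H →L[ℂ] H, U ∈ unitary (H →L[ℂ] H) ∧
      ‖V ∘L W - U ∘L V‖ ≤ ε + ‖(adjoint O ∘L O - ContinuousLinearMap.id ℂ H) ∘L V‖ := by
  obtain ⟨U, hU, hOU⟩ := O.exists_mem_unitary_opNorm_sub_comp_le V
  refine ⟨U, hU, ?_⟩
  calc ‖V ∘L W - U ∘L V‖ ≤ ‖V ∘L W - O ∘L V‖ + ‖O ∘L V - U ∘L V‖ :=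
        norm_sub_le_norm_sub_add_norm_sub _ _ _
    _ ≤ ε + ‖(adjoint O ∘L O - ContinuousLinearMap.id ℂ H) ∘L V‖ :=
        add_le_add h (by rwa [← sub_comp])

/-- Unitary reconstruction lemma: a logical unitary `W` approximately
implemented on the code space (image of `V`) by a physical operator `O` is
also approximately implemented by a genuinely unitary physical operator `U`. -/
theorem exists_unitary_approx_implementation
    (H K : Type*) [NormedAddCommGroup H] [InnerProductSpace ℂ H] [FiniteDimensional ℂ H]
    [NormedAddCommGroup K] [InnerProductSpace ℂ K] [FiniteDimensional ℂ K]
    (O : H →L[ℂ] H) (V : K →L[ℂ] H) (W : K →L[ℂ] K) (hW : W ∈ unitary (K →L[ℂ] K))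
    (ε : ℝ) (hε : 0 ≤ ε) (h : ‖V ∘L W - O ∘L V‖ ≤ ε) :
    ∃ U : H →L[ℂ] H, U ∈ unitary (H →L[ℂ] H) ∧
      ‖V ∘L W - U ∘L V‖ ≤ ε + ‖(adjoint O ∘L O - ContinuousLinearMap.id ℂ H) ∘L V‖ :=
  exists_unitary_approx_implementation_general H K O V W ε h
end
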